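/- arXiv:1709.07712 — 2 statements merged into one kernel-verified Lean document; each statement's English description precedes it below -/
import Mathlib

section
/- Let G be a (fork, bull)-free graph containing an induced 6-cycle v_1...v_6. If a vertex x outside the cycle has a neighborhood on the cycle that is a nonempty stable set not equal to the whole cycle's closed patterns, then N(x) restricted to the cycle equals {v_1,v_3,v_5} or {v_2,v_4,v_6}. More generally, in a (fork, bull)-free graph with an induced cycle of length ℓ ≥ 6, every vertex outside the cycle whose cycle-neighborhood is a nonempty stable set satisfies ℓ = 6 and is adjacent to exactly the three alternate vertices of the cycle. -/
open SimpleGraph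

/-- A homogeneous set: every vertex outside is complete or anticomplete to it. -/
def IsHomogeneousSet {V : Type*} (G : SimpleGraph V) (S : Set V) : Prop :=
  ∀ v ∉ S, (∀ s ∈ S, G.Adj v s) ∨ (∀ s ∈ S, ¬ G.Adj v s)

/-- A graph is prime if its only homogeneous sets are trivial. -/
def IsPrime {V : Type*} (G : SimpleGraph V) : Prop :=
  ∀ S : Set V, IsHomogeneousSet G S → S = ∅ ∨ (∃ v, S = {v}) ∨ S = Set.univ

/-- `Free G H` : `G` contains no induced subgraph isomorphic to `H`. -/
def Free {V W : Type*} (G : SimpleGraph V) (H : SimpleGraph W) : Prop :=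
  ¬ Nonempty (H ↪g G)

/-- The house: complement of the path on 5 vertices. -/
def house : SimpleGraph (Fin 5) := (pathGraph 5)ᶜ

/-- The dart: a diamond on 0,1,2,3 (missing edge 2-3) plus a pendant vertex 4
adjacent to the degree-3 vertex 0. -/
def dart : SimpleGraph (Fin 5) :=
  SimpleGraph.fromRel (fun a b =>
    (a, b) ∈ [((0 : Fin 5), (1 : Fin 5)), (0, 2), (0, 3), (1, 2), (1, 3), (0, 4)])

/-- The co-dart: complement of the dart. -/
def codart : SimpleGraph (Fin 5) := dartᶜ

/-- The bull: triangle 0,1,2 with pendant vertices 3 (at 0) and 4 (at 1). -/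
def bull : SimpleGraph (Fin 5) :=
  SimpleGraph.fromRel (fun a b =>
    (a, b) ∈ [((0 : Fin 5), (1 : Fin 5)), (1, 2), (0, 2), (0, 3), (1, 4)])

/-- The fork (chair): path 0-1-2-3 plus a vertex 4 adjacent to 1. -/
def fork : SimpleGraph (Fin 5) :=
  SimpleGraph.fromRel (fun a b =>
    (a, b) ∈ [((0 : Fin 5), (1 : Fin 5)), (1, 2), (2, 3), (1, 4)])

/-- The hammer: triangle 0,1,2 with a path 2-3-4 attached. -/
def hammer : SimpleGraph (Fin 5) :=
  SimpleGraph.fromRel (fun a b =>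
    (a, b) ∈ [((0 : Fin 5), (1 : Fin 5)), (1, 2), (0, 2), (2, 3), (3, 4)])

/-- A graph is perfect if every induced subgraph has chromatic number equal to
its clique number. -/
def IsPerfect {V : Type*} (G : SimpleGraph V) : Prop :=
  ∀ S : Set V, (G.induce S).chromaticNumber = ((G.induce S).cliqueNum : ℕ∞)

/-- A realization of an induced cycle of length `ℓ` by nonempty pairwise disjoint sets
`A i`, with `A i` complete to `A (i+1)` and no other edges between distinct sets. -/
def CycleBlowup {V : Type*} (G : SimpleGraph V) {ℓ : ℕ} (A : ZMod ℓ → Set V) : Prop :=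
  (∀ i, (A i).Nonempty) ∧
  (∀ i j, i ≠ j → Disjoint (A i) (A j)) ∧
  (∀ i, ∀ x ∈ A i, ∀ y ∈ A (i + 1), G.Adj x y) ∧
  (∀ i j, i ≠ j → j ≠ i + 1 → i ≠ j + 1 → ∀ x ∈ A i, ∀ y ∈ A j, ¬ G.Adj x y)

/-
A vertex `x` with a stable neighbourhood on the cycle that sees `v i` must also see
`v (i + 2)`: otherwise `x - v i - v (i+1) - v (i+2)` with the pendant `v (i-1)` at `v i` is an
induced fork. Hence `x` sees `v i, v (i+2), v (i+4), …`. If `ℓ ≥ 7`, the path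
`v (i+1) - v i - x - v (i+4)` with the pendant `v (i-1)` at `v i` is an induced fork, so `ℓ = 6`
and the neighbourhood is forced to be one of the two alternating triples.
-/

lemma nonempty_fork_embedding {V : Type*} (G : SimpleGraph V) {a b c d e : V}
    (hab : G.Adj a b) (hbc : G.Adj b c) (hcd : G.Adj c d) (hbe : G.Adj b e)
    (hac : ¬ G.Adj a c) (had : ¬ G.Adj a d) (hae : ¬ G.Adj a e)
    (hbd : ¬ G.Adj b d) (hce : ¬ G.Adj c e) (hde : ¬ G.Adj d e)
    (hae' : a ≠ e) (hbd' : b ≠ d) :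
    Nonempty (fork ↪g G) := by
  have hab' : a ≠ b := hab.ne
  have hbc' : b ≠ c := hbc.ne
  have hcd' : c ≠ d := hcd.ne
  have hbe' : b ≠ e := hbe.ne
  have hac' : a ≠ c := fun h => had (h ▸ hcd)
  have had' : a ≠ d := fun h => hac (h ▸ hcd.symm)
  have hce' : c ≠ e := fun h => hde (h ▸ hcd.symm)
  have hde' : d ≠ e := fun h => hbd (h ▸ hbe)
  refine ⟨⟨⟨![a, b, c, d, e], ?_⟩, ?_⟩⟩
  · intro i j hij
    fin_cases i <;> fin_cases j <;> simp_all
  · intro i j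
    fin_cases i <;> fin_cases j <;>
      simp [fork, fromRel_adj, G.adj_comm] <;>
      first | rfl | assumption | exact hab.symm

lemma ZMod.add_natCast_ne_self {ℓ : ℕ} (i : ZMod ℓ) {k : ℕ} (hk₀ : 0 < k) (hkℓ : k < ℓ) :
    i + k ≠ i := by
  intro h
  have hdvd : ℓ ∣ k := (ZMod.natCast_eq_zero_iff k ℓ).1 (by simpa using h)
  exact absurd (Nat.le_of_dvd hk₀ hdvd) (by omega)

lemma ZMod.eq_triple_of_add_two_mem_of_add_one_notMem {S : Set (ZMod 6)} {i : ZMod 6} (hi : i ∈ S)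
    (hS₂ : ∀ j ∈ S, j + 2 ∈ S) (hS₁ : ∀ j ∈ S, j + 1 ∉ S) : S = {i, i + 2, i + 4} := by
  have h₂ : i + 2 ∈ S := hS₂ i hi
  have h₄ : i + 4 ∈ S := by rw [show i + 4 = i + 2 + 2 by ring]; exact hS₂ _ h₂
  have h₁ : i + 1 ∉ S := hS₁ i hi
  have h₃ : i + 3 ∉ S := by rw [show i + 3 = i + 2 + 1 by ring]; exact hS₁ _ h₂
  have h₅ : i + 5 ∉ S := by rw [show i + 5 = i + 4 + 1 by ring]; exact hS₁ _ h₄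
  ext j
  obtain ⟨d, rfl⟩ : ∃ d, j = i + d := ⟨j - i, by ring⟩
  have hd : d = 0 ∨ d = 1 ∨ d = 2 ∨ d = 3 ∨ d = 4 ∨ d = 5 := by revert d; decide
  rcases hd with rfl | rfl | rfl | rfl | rfl | rfl <;> simp [hi, h₁, h₂, h₃, h₄, h₅] <;> decide

def IsInducedCycle {V : Type*} (G : SimpleGraph V) {ℓ : ℕ} (v : ZMod ℓ → V) : Prop :=
  ∀ i j, G.Adj (v i) (v j) ↔ (j = i + 1 ∨ i = j + 1)

section InducedCycle

variable {V : Type*} {G : SimpleGraph V} {ℓ : ℕ} {v : ZMod ℓ → V}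

lemma IsInducedCycle.adj_add_one (hc : IsInducedCycle G v) (i : ZMod ℓ) :
    G.Adj (v i) (v (i + 1)) :=
  (hc _ _).2 (Or.inl rfl)

lemma IsInducedCycle.not_adj_of_add_two_le (hc : IsInducedCycle G v) (i : ZMod ℓ) {a b : ℕ}
    (hab : a + 2 ≤ b) (hb : b + 2 ≤ ℓ + a) :
    ¬ G.Adj (v (i + a)) (v (i + b)) := by
  rw [hc]
  rintro (h | h)
  · obtain ⟨k, rfl⟩ : ∃ k, b = a + 1 + k := ⟨b - a - 1, by omega⟩
    refine ZMod.add_natCast_ne_self (i + a + 1 : ZMod ℓ) (k := k) (by omega) (by omega) ?_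
    push_cast at h
    linear_combination h
  · obtain ⟨k, hk⟩ : ∃ k, ℓ + a = b + 1 + k := ⟨ℓ + a - b - 1, by omega⟩
    refine ZMod.add_natCast_ne_self (i + b + 1 : ZMod ℓ) (k := k) (by omega) (by omega) ?_
    have hk' : ((ℓ + a : ℕ) : ZMod ℓ) = ((b + 1 + k : ℕ) : ZMod ℓ) := congrArg _ hk
    push_cast [ZMod.natCast_self] at hk'
    linear_combination h - hk'

lemma Function.Injective.apply_add_ne_of_lt (hinj : Function.Injective v) (i : ZMod ℓ)
    {a b : ℕ} (hab : a < b) (hb : b < ℓ + a) : v (i + a) ≠ v (i + b) := by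
  intro h
  obtain ⟨k, rfl⟩ : ∃ k, b = a + k := ⟨b - a, by omega⟩
  refine ZMod.add_natCast_ne_self (i + a : ZMod ℓ) (k := k) (by omega) (by omega) ?_
  push_cast at h
  linear_combination -hinj h

variable {x : V}

lemma not_adj_add_one_of_pairwise (hc : IsInducedCycle G v)
    (hstab : ({i | G.Adj x (v i)} : Set (ZMod ℓ)).Pairwise (fun i j => ¬ G.Adj (v i) (v j)))
    (i : ZMod ℓ) (hi : G.Adj x (v i)) : ¬ G.Adj x (v (i + 1)) := fun hi₁ =>
  have hedge := hc.adj_add_one i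
  hstab hi hi₁ (fun h => hedge.ne (congrArg v h)) hedge

lemma adj_add_two_of_adj (hc : IsInducedCycle G v)
    (hinj : Function.Injective v) (hfork : _root_.Free G fork) (hx : x ∉ Set.range v)
    (hcons : ∀ i, G.Adj x (v i) → ¬ G.Adj x (v (i + 1))) (hℓ : 5 ≤ ℓ) (i : ZMod ℓ)
    (hi : G.Adj x (v i)) :
    G.Adj x (v (i + 2)) := by
  obtain ⟨j, rfl⟩ : ∃ j, i = j + 1 := ⟨i - 1, by ring⟩
  rw [show j + 1 + 2 = j + 3 by ring]
  by_contra hj₃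
  have hn (a b : ℕ) (hab : a + 2 ≤ b) (hb : b + 2 ≤ ℓ + a) := hc.not_adj_of_add_two_le j hab hb
  refine hfork (nonempty_fork_embedding G (a := x) (b := v (j + 1)) (c := v (j + 2))
    (d := v (j + 3)) (e := v j) hi ?_ ?_ (hc.adj_add_one j).symm ?_ hj₃ ?_ ?_ ?_ ?_ ?_ ?_)
  · simpa [add_assoc, one_add_one_eq_two] using hc.adj_add_one (j + 1)
  · simpa [add_assoc, show (2 : ZMod ℓ) + 1 = 3 by norm_num] using hc.adj_add_one (j + 2)
  · simpa [add_assoc, one_add_one_eq_two] using hcons _ hi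
  · exact fun h => hcons j h hi
  · simpa using hn 1 3 (by omega) (by omega)
  · simpa [G.adj_comm] using hn 0 2 (by omega) (by omega)
  · simpa [G.adj_comm] using hn 0 3 (by omega) (by omega)
  · exact fun h => hx ⟨j, h.symm⟩
  · simpa using hinj.apply_add_ne_of_lt j (a := 1) (b := 3) (by omega) (by omega)

lemma not_adj_add_four_of_adj (hc : IsInducedCycle G v)
    (hinj : Function.Injective v) (hfork : _root_.Free G fork)
    (hcons : ∀ i, G.Adj x (v i) → ¬ G.Adj x (v (i + 1))) (hℓ : 7 ≤ ℓ) (i : ZMod ℓ)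
    (hi : G.Adj x (v i)) :
    ¬ G.Adj x (v (i + 4)) := by
  obtain ⟨j, rfl⟩ : ∃ j, i = j + 1 := ⟨i - 1, by ring⟩
  rw [show j + 1 + 4 = j + 5 by ring]
  intro hj₅
  have hn (a b : ℕ) (hab : a + 2 ≤ b) (hb : b + 2 ≤ ℓ + a) := hc.not_adj_of_add_two_le j hab hb
  refine hfork (nonempty_fork_embedding G (a := v (j + 2)) (b := v (j + 1)) (c := x)
    (d := v (j + 5)) (e := v j) ?_ hi.symm hj₅ (hc.adj_add_one j).symm ?_ ?_ ?_ ?_ ?_ ?_ ?_ ?_)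
  · simpa [add_assoc, one_add_one_eq_two, G.adj_comm] using hc.adj_add_one (j + 1)
  · simpa [add_assoc, one_add_one_eq_two, G.adj_comm] using hcons _ hi
  · simpa using hn 2 5 (by omega) (by omega)
  · simpa [G.adj_comm] using hn 0 2 (by omega) (by omega)
  · simpa using hn 1 5 (by omega) (by omega)
  · exact fun h => hcons j h hi
  · simpa [G.adj_comm] using hn 0 5 (by omega) (by omega)
  · simpa [eq_comm] using hinj.apply_add_ne_of_lt j (a := 0) (b := 2) (by omega) (by omega)
  · simpa using hinj.apply_add_ne_of_lt j (a := 1) (b := 5) (by omega) (by omega)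

end InducedCycle

theorem stmt10_general {V : Type*} (G : SimpleGraph V)
    (hfork : _root_.Free G fork)
    (ℓ : ℕ) (hℓ : 6 ≤ ℓ) (v : ZMod ℓ → V) (hinj : Function.Injective v)
    (hadj : ∀ i j, G.Adj (v i) (v j) ↔ (j = i + 1 ∨ i = j + 1))
    (x : V) (hx : x ∉ Set.range v)
    (hne : ({i | G.Adj x (v i)} : Set (ZMod ℓ)).Nonempty)
    (hstab : ({i | G.Adj x (v i)} : Set (ZMod ℓ)).Pairwise
      (fun i j => ¬ G.Adj (v i) (v j))) :
    ℓ = 6 ∧ ∃ i : ZMod ℓ, {j | G.Adj x (v j)} = ({i, i + 2, i + 4} : Set (ZMod ℓ)) := by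
  obtain ⟨i, hi⟩ := hne
  have hcons := not_adj_add_one_of_pairwise hadj hstab
  have hstep := adj_add_two_of_adj hadj hinj hfork hx hcons (by omega)
  have hℓ6 : ℓ = 6 := by
    by_contra hℓ6
    refine not_adj_add_four_of_adj hadj hinj hfork hcons (by omega) i hi ?_
    simpa [add_assoc, show (2 : ZMod ℓ) + 2 = 4 by norm_num] using hstep _ (hstep i hi)
  subst hℓ6
  exact ⟨rfl, i, ZMod.eq_triple_of_add_two_mem_of_add_one_notMem hi hstep hcons⟩

/-- In a (fork, bull)-free graph with an induced cycle of length `ℓ ≥ 6`, any outside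
vertex whose neighborhood on the cycle is a nonempty stable set forces `ℓ = 6` and is
adjacent to exactly the three alternate vertices of the cycle. -/
theorem stmt10 {V : Type*} (G : SimpleGraph V)
    (hfork : _root_.Free G fork) (hbull : _root_.Free G bull)
    (ℓ : ℕ) (hℓ : 6 ≤ ℓ) (v : ZMod ℓ → V) (hinj : Function.Injective v)
    (hadj : ∀ i j, G.Adj (v i) (v j) ↔ (j = i + 1 ∨ i = j + 1))
    (x : V) (hx : x ∉ Set.range v)
    (hne : ({i | G.Adj x (v i)} : Set (ZMod ℓ)).Nonempty)
    (hstab : ({i | G.Adj x (v i)} : Set (ZMod ℓ)).Pairwise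
      (fun i j => ¬ G.Adj (v i) (v j))) :
    ℓ = 6 ∧ ∃ i : ZMod ℓ, {j | G.Adj x (v j)} = ({i, i + 2, i + 4} : Set (ZMod ℓ)) :=
  stmt10_general G hfork ℓ hℓ v hinj hadj x hx hne hstab
end

section
/- Let G be a prime (fork, bull)-free graph with no hole of length at least 6 containing an induced path v_1-v_2-v_3-v_4-v_5 = B. Then every vertex x outside B with N(x) ∩ B nonempty and not equal to B satisfies: N(x) ∩ B is one of {v_1}, {v_5}, {v_1,v_2}, {v_4,v_5}, {v_2,v_4}, {v_1,v_2,v_3}, {v_2,v_3,v_4}, {v_3,v_4,v_5}, {v_1,v_3,v_5}, {v_1,v_3,v_4,v_5}, {v_1,v_2,v_3,v_5}. -/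
open SimpleGraph

/-!
A vertex `x` outside the path `B` induces, together with `B`, a graph on six vertices that is
determined by the trace `S = N(x) ∩ B`; here it is `(pathGraph 5).extendByVertex S`, with `x`
as the vertex `none`. So the claim is a check over the 32 subsets `S` of `B`: apart from `∅`, `B`
and the eleven admissible traces, each of the remaining nineteen yields an explicit induced fork
or bull, except `S = {v₁, v₅}`, where `x` closes `B` into an induced `C₆`.
-/

namespace SimpleGraph

variable {V W : Type*}

instance (n : ℕ) : DecidableRel (pathGraph n).Adj := fun _ _ => decidable_of_iff' _ pathGraph_adj

def extendByVertex (H : SimpleGraph W) (S : Set W) : SimpleGraph (Option W) where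
  Adj
    | some i, some j => H.Adj i j
    | none, some j => j ∈ S
    | some i, none => i ∈ S
    | none, none => False
  symm := ⟨by
    rintro (_ | i) (_ | j) h
    exacts [h, h, h, h.symm]⟩
  loopless := ⟨by
    rintro (_ | i) h
    exacts [h, H.irrefl h]⟩

instance (H : SimpleGraph W) [DecidableRel H.Adj] (S : Set W) [DecidablePred (· ∈ S)] :
    DecidableRel (H.extendByVertex S).Adj
  | some i, some j => inferInstanceAs (Decidable (H.Adj i j))
  | none, some j => inferInstanceAs (Decidable (j ∈ S))
  | some i, none => inferInstanceAs (Decidable (i ∈ S))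
  | none, none => inferInstanceAs (Decidable False)

def Embedding.extendByVertex {G : SimpleGraph V} {H : SimpleGraph W} (p : H ↪g G) (x : V)
    (hx : x ∉ Set.range p) : H.extendByVertex {i | G.Adj x (p i)} ↪g G where
  toFun := fun v => v.elim x p
  inj' := by
    rintro (_ | i) (_ | j) h
    · rfl
    · exact absurd ⟨j, h.symm⟩ hx
    · exact absurd ⟨i, h⟩ hx
    · exact congrArg some (p.injective h)
  map_rel_iff' := by
    rintro (_ | i) (_ | j)
    · exact iff_of_false G.irrefl id
    · exact Iff.rfl
    · exact G.adj_comm _ _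
    · exact p.map_adj_iff

theorem nonempty_embedding_of_adj_iff {G : SimpleGraph V} {H : SimpleGraph W} (f : W → V)
    (hf : Function.Injective f) (hadj : ∀ i j, G.Adj (f i) (f j) ↔ H.Adj i j) :
    Nonempty (H ↪g G) :=
  ⟨⟨⟨f, hf⟩, hadj _ _⟩⟩

end SimpleGraph

theorem Free.of_embedding {U V W : Type*} {K : SimpleGraph U} {G : SimpleGraph V}
    {H : SimpleGraph W} (e : K ↪g G) (hG : _root_.Free G H) : _root_.Free K H :=
  fun ⟨f⟩ => hG ⟨e.comp f⟩

instance : DecidableRel fork.Adj := inferInstanceAs (DecidableRel (fromRel _).Adj)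

instance : DecidableRel bull.Adj := inferInstanceAs (DecidableRel (fromRel _).Adj)

open Finset

instance {α : Type*} [DecidableEq α] (s : Finset α) : DecidablePred (· ∈ (s : Set α)) :=
  fun _ => decidable_of_iff _ mem_coe

theorem pathGraph_extendByVertex_pattern_mem (S : Finset (Fin 5)) (hne : S.Nonempty)
    (huniv : S ≠ univ)
    (hfork : _root_.Free ((pathGraph 5).extendByVertex S) fork)
    (hbull : _root_.Free ((pathGraph 5).extendByVertex S) bull)
    (hhole : _root_.Free ((pathGraph 5).extendByVertex S) (cycleGraph 6)) :
    S ∈ ({{0}, {4}, {0, 1}, {3, 4}, {1, 3}, {0, 1, 2}, {1, 2, 3}, {2, 3, 4}, {0, 2, 4},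
      {0, 2, 3, 4}, {0, 1, 2, 4}} : Finset (Finset (Fin 5))) := by
  by_contra hadm
  have hbad : S ∈ ({{1}, {2}, {3}, {0, 2}, {0, 3}, {0, 4}, {1, 2}, {1, 4}, {2, 3}, {2, 4},
      {0, 1, 3}, {0, 1, 4}, {0, 2, 3}, {0, 3, 4}, {1, 2, 4}, {1, 3, 4},
      {0, 1, 2, 3}, {0, 1, 3, 4}, {1, 2, 3, 4}} : Finset (Finset (Fin 5))) := by
    clear hfork hbull hhole
    revert S; decide
  simp only [mem_insert, mem_singleton] at hbad
  rcases hbad with rfl | rfl | rfl | rfl | rfl | rfl | rfl | rfl | rfl | rfl | rfl | rfl | rfl |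
    rfl | rfl | rfl | rfl | rfl | rfl
  · exact hfork <| nonempty_embedding_of_adj_iff
      ![some 0, some 1, some 2, some 3, none] (by decide) (by decide)
  · exact hfork <| nonempty_embedding_of_adj_iff
      ![some 1, some 2, some 3, some 4, none] (by decide) (by decide)
  · exact hfork <| nonempty_embedding_of_adj_iff
      ![some 4, some 3, some 2, some 1, none] (by decide) (by decide)
  · exact hfork <| nonempty_embedding_of_adj_iff
      ![some 1, some 2, some 3, some 4, none] (by decide) (by decide)
  · exact hfork <| nonempty_embedding_of_adj_iff
      ![some 2, some 3, none, some 0, some 4] (by decide) (by decide)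
  · exact hhole <| nonempty_embedding_of_adj_iff
      ![some 0, some 1, some 2, some 3, some 4, none] (by decide) (by decide)
  · exact hbull <| nonempty_embedding_of_adj_iff
      ![some 1, some 2, none, some 0, some 3] (by decide) (by decide)
  · exact hfork <| nonempty_embedding_of_adj_iff
      ![some 0, some 1, some 2, some 3, none] (by decide) (by decide)
  · exact hbull <| nonempty_embedding_of_adj_iff
      ![some 2, some 3, none, some 1, some 4] (by decide) (by decide)
  · exact hfork <| nonempty_embedding_of_adj_iff
      ![some 3, some 2, some 1, some 0, none] (by decide) (by decide)
  · exact hfork <| nonempty_embedding_of_adj_iff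
      ![some 2, some 3, none, some 0, some 4] (by decide) (by decide)
  · exact hbull <| nonempty_embedding_of_adj_iff
      ![some 1, none, some 0, some 2, some 4] (by decide) (by decide)
  · exact hbull <| nonempty_embedding_of_adj_iff
      ![some 2, some 3, none, some 1, some 4] (by decide) (by decide)
  · exact hbull <| nonempty_embedding_of_adj_iff
      ![some 3, none, some 4, some 2, some 0] (by decide) (by decide)
  · exact hbull <| nonempty_embedding_of_adj_iff
      ![some 1, some 2, none, some 0, some 3] (by decide) (by decide)
  · exact hfork <| nonempty_embedding_of_adj_iff
      ![some 0, some 1, none, some 4, some 2] (by decide) (by decide)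
  · exact hbull <| nonempty_embedding_of_adj_iff
      ![some 3, none, some 2, some 4, some 0] (by decide) (by decide)
  · exact hbull <| nonempty_embedding_of_adj_iff
      ![some 1, none, some 0, some 2, some 4] (by decide) (by decide)
  · exact hbull <| nonempty_embedding_of_adj_iff
      ![some 1, none, some 2, some 0, some 4] (by decide) (by decide)

theorem stmt14_general {V : Type*} (G : SimpleGraph V)
    (hfork : _root_.Free G fork) (hbull : _root_.Free G bull)
    (hnohole : ∀ n : ℕ, 6 ≤ n → ¬ Nonempty (cycleGraph n ↪g G))
    (p : pathGraph 5 ↪g G) :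
    ∀ x, x ∉ Set.range p →
      ({i | G.Adj x (p i)} : Set (Fin 5)).Nonempty →
      {i | G.Adj x (p i)} ≠ (Set.univ : Set (Fin 5)) →
      {i | G.Adj x (p i)} = ({0} : Set (Fin 5)) ∨
      {i | G.Adj x (p i)} = ({4} : Set (Fin 5)) ∨
      {i | G.Adj x (p i)} = ({0, 1} : Set (Fin 5)) ∨
      {i | G.Adj x (p i)} = ({3, 4} : Set (Fin 5)) ∨
      {i | G.Adj x (p i)} = ({1, 3} : Set (Fin 5)) ∨
      {i | G.Adj x (p i)} = ({0, 1, 2} : Set (Fin 5)) ∨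
      {i | G.Adj x (p i)} = ({1, 2, 3} : Set (Fin 5)) ∨
      {i | G.Adj x (p i)} = ({2, 3, 4} : Set (Fin 5)) ∨
      {i | G.Adj x (p i)} = ({0, 2, 4} : Set (Fin 5)) ∨
      {i | G.Adj x (p i)} = ({0, 2, 3, 4} : Set (Fin 5)) ∨
      {i | G.Adj x (p i)} = ({0, 1, 2, 4} : Set (Fin 5)) := by
  intro x hx hne hproper
  classical
  obtain ⟨T, hT⟩ : ∃ T : Finset (Fin 5), ↑T = {i | G.Adj x (p i)} :=
    ⟨_, Set.coe_toFinset _⟩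
  have e := p.extendByVertex x hx
  rw [← hT] at e hne hproper ⊢
  have hadm := pathGraph_extendByVertex_pattern_mem T (coe_nonempty.mp hne)
    (by exact_mod_cast hproper) (hfork.of_embedding e) (hbull.of_embedding e)
    (Free.of_embedding e (hnohole 6 le_rfl))
  simp only [mem_insert, mem_singleton] at hadm
  simpa only [← coe_inj, coe_insert, coe_singleton] using hadm

/-- In a prime (fork, bull)-free graph with no induced cycle of length at least 6
containing an induced `P5` `p 0 - ... - p 4`, every outside vertex whose neighborhood on
the path is nonempty and proper has one of eleven prescribed neighborhood patterns. -/
theorem stmt14 {V : Type*} [Fintype V] (G : SimpleGraph V)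
    (hprime : IsPrime G) (hfork : _root_.Free G fork) (hbull : _root_.Free G bull)
    (hnohole : ∀ n : ℕ, 6 ≤ n → ¬ Nonempty (cycleGraph n ↪g G))
    (p : pathGraph 5 ↪g G) :
    ∀ x, x ∉ Set.range p →
      ({i | G.Adj x (p i)} : Set (Fin 5)).Nonempty →
      {i | G.Adj x (p i)} ≠ (Set.univ : Set (Fin 5)) →
      {i | G.Adj x (p i)} = ({0} : Set (Fin 5)) ∨
      {i | G.Adj x (p i)} = ({4} : Set (Fin 5)) ∨
      {i | G.Adj x (p i)} = ({0, 1} : Set (Fin 5)) ∨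
      {i | G.Adj x (p i)} = ({3, 4} : Set (Fin 5)) ∨
      {i | G.Adj x (p i)} = ({1, 3} : Set (Fin 5)) ∨
      {i | G.Adj x (p i)} = ({0, 1, 2} : Set (Fin 5)) ∨
      {i | G.Adj x (p i)} = ({1, 2, 3} : Set (Fin 5)) ∨
      {i | G.Adj x (p i)} = ({2, 3, 4} : Set (Fin 5)) ∨
      {i | G.Adj x (p i)} = ({0, 2, 4} : Set (Fin 5)) ∨
      {i | G.Adj x (p i)} = ({0, 2, 3, 4} : Set (Fin 5)) ∨
      {i | G.Adj x (p i)} = ({0, 1, 2, 4} : Set (Fin 5)) :=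
  stmt14_general G hfork hbull hnohole p
end
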